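/- arXiv:1911.03645 — 5 statements merged into one kernel-verified Lean document; each statement's English description precedes it below -/
import Mathlib

section
/- Let p = (p_1, ..., p_c) be a probability vector with all entries strictly positive, and define the pairwise likelihood matrix R(p) by r_ij = p_i / (p_i + p_j) for i ≠ j and r_ii = 0. Then the map p ↦ R(p) is injective on the set of strictly positive probability vectors. -/
/-! Equal ratios `p i / (p i + p j) = q i / (q i + q j)` say `p i * q j = q i * p j`, i.e. `p`
and `q` are proportional; two proportional vectors with the same nonzero sum coincide. -/

theorem mul_eq_mul_of_div_add_eq_div_add {K : Type*} [Field K] {a b a' b' : K}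
    (hab : a + b ≠ 0) (hab' : a' + b' ≠ 0) (h : a / (a + b) = a' / (a' + b')) :
    a * b' = a' * b := by
  rw [div_eq_div_iff hab hab'] at h
  linear_combination h

theorem eq_of_mul_eq_mul_of_sum_eq {ι K : Type*} [Fintype ι] [Field K] {p q : ι → K}
    (hpq : ∀ i j, p i * q j = q i * p j) (hsum : ∑ i, p i = ∑ i, q i) (hne : ∑ i, p i ≠ 0) :
    p = q := by
  funext i
  have h : p i * ∑ j, q j = q i * ∑ j, p j := by
    simp only [Finset.mul_sum, hpq i]
  rw [← hsum] at h
  exact mul_right_cancel₀ hne h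

theorem pairwise_likelihood_matrix_injOn_general (c : ℕ) :
    Set.InjOn
      (fun p : Fin c → ℝ =>
        (Matrix.of fun i j => if i = j then (0 : ℝ) else p i / (p i + p j)))
      {p : Fin c → ℝ | (∀ i, 0 < p i) ∧ ∑ i, p i = 1} := by
  rintro p ⟨hp, hp_sum⟩ q ⟨hq, hq_sum⟩ hpq
  refine eq_of_mul_eq_mul_of_sum_eq (fun i j => ?_) (hp_sum.trans hq_sum.symm) (by simp [hp_sum])
  rcases eq_or_ne i j with rfl | hij
  · exact mul_comm _ _
  · have hr := congr_fun₂ hpq i j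
    simp only [Matrix.of_apply, if_neg hij] at hr
    exact mul_eq_mul_of_div_add_eq_div_add (add_pos (hp i) (hp j)).ne'
      (add_pos (hq i) (hq j)).ne' hr

/-- The map from strictly positive probability vectors to their pairwise
likelihood matrices (`r i j = p i / (p i + p j)` off-diagonal, zero diagonal)
is injective. -/
theorem pairwise_likelihood_matrix_injOn (c : ℕ) (hc : 2 ≤ c) :
    Set.InjOn
      (fun p : Fin c → ℝ =>
        (Matrix.of fun i j => if i = j then (0 : ℝ) else p i / (p i + p j)))
      {p : Fin c → ℝ | (∀ i, 0 < p i) ∧ ∑ i, p i = 1} :=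
  pairwise_likelihood_matrix_injOn_general c
end

section
/- Let R be a c×c matrix with zero diagonal, entries in (0,1) off-diagonal, and r_ij + r_ji = 1 for i ≠ j. If the positive probability vector p satisfies r_ij p_j = r_ji p_i for all i ≠ j, then p is the unique positive probability vector achieving δ(p) = 0 for the Wu-Lin-Weng functional δ(p) = ∑_i ∑_{j≠i} (r_ij p_j − r_ji p_i)². -/
/-!
The functional `δ` is a sum of squares, so `δ q = 0` forces every detailed-balance equation
`r i j * q j = r j i * q i`. Combined with the same equations for `p` and `r i j ≠ 0`, this gives
`q j * p i = q i * p j` for all `i, j`: `q` is proportional to `p`, and both sum to `1`.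
-/

open Finset

variable {ι K : Type*}

def wuLinWengDelta [Fintype ι] [DecidableEq ι] [Ring K] (r : Matrix ι ι K) (p : ι → K) : K :=
  ∑ i, ∑ j ∈ univ.erase i, (r i j * p j - r j i * p i) ^ 2

theorem wuLinWengDelta_eq_zero_iff [Fintype ι] [DecidableEq ι]
    [Ring K] [LinearOrder K] [IsStrictOrderedRing K]
    (r : Matrix ι ι K) (p : ι → K) :
    wuLinWengDelta r p = 0 ↔ ∀ i j, i ≠ j → r i j * p j = r j i * p i := by
  simp only [wuLinWengDelta,
    sum_eq_zero_iff_of_nonneg fun _ _ => sum_nonneg fun _ _ => sq_nonneg _,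
    sum_eq_zero_iff_of_nonneg fun _ _ => sq_nonneg _, mem_univ, mem_erase, ne_eq, true_implies,
    and_true, pow_eq_zero_iff two_ne_zero, sub_eq_zero]
  exact forall_congr' fun i => forall_congr' fun j => by rw [eq_comm (a := j)]

theorem cross_mul_eq_of_detailed_balance [CommRing K] [IsDomain K] {r : Matrix ι ι K}
    (hr : ∀ i j, i ≠ j → r i j ≠ 0) {p q : ι → K}
    (hp : ∀ i j, i ≠ j → r i j * p j = r j i * p i)
    (hq : ∀ i j, i ≠ j → r i j * q j = r j i * q i) (i j : ι) :
    q j * p i = q i * p j := by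
  rcases eq_or_ne i j with rfl | hij
  · rfl
  refine mul_left_cancel₀ (hr i j hij) ?_
  calc r i j * (q j * p i) = (r i j * q j) * p i := by ring
    _ = q i * (r j i * p i) := by rw [hq i j hij]; ring
    _ = r i j * (q i * p j) := by rw [← hp i j hij]; ring

theorem eq_of_cross_mul_eq_of_sum_eq_one [Fintype ι] [CommSemiring K] {p q : ι → K}
    (hp : ∑ i, p i = 1) (hq : ∑ i, q i = 1) (hpq : ∀ i j, q j * p i = q i * p j) : q = p := by
  funext i
  calc q i = ∑ j, q i * p j := by rw [← mul_sum, hp, mul_one]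
    _ = p i := by simp only [← hpq i, ← sum_mul, hq, one_mul]

theorem wu_lin_weng_unique_minimizer_general (c : ℕ)
    (R : Matrix (Fin c) (Fin c) ℝ)
    (hmem : ∀ i j, i ≠ j → R i j ∈ Set.Ioo (0 : ℝ) 1)
    (p : Fin c → ℝ) (hsum : ∑ i, p i = 1)
    (hbal : ∀ i j, i ≠ j → R i j * p j = R j i * p i) :
    (∑ i, ∑ j ∈ Finset.univ.erase i, (R i j * p j - R j i * p i) ^ 2 = 0) ∧
    (∀ q : Fin c → ℝ, (∀ i, 0 < q i) → ∑ i, q i = 1 →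
      ∑ i, ∑ j ∈ Finset.univ.erase i, (R i j * q j - R j i * q i) ^ 2 = 0 →
      q = p) := by
  have hR : ∀ i j, i ≠ j → R i j ≠ 0 := fun i j hij => (hmem i j hij).1.ne'
  refine ⟨(wuLinWengDelta_eq_zero_iff R p).2 hbal, fun q _ hqsum hq => ?_⟩
  have hqbal := (wuLinWengDelta_eq_zero_iff R q).1 hq
  exact eq_of_cross_mul_eq_of_sum_eq_one hsum hqsum
    (cross_mul_eq_of_detailed_balance hR hbal hqbal)

/-- If a positive probability vector `p` satisfies `r i j * p j = r j i * p i`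
for all `i ≠ j`, then `p` is the unique positive probability vector on which
the Wu-Lin-Weng functional vanishes. -/
theorem wu_lin_weng_unique_minimizer (c : ℕ) (hc : 2 ≤ c)
    (R : Matrix (Fin c) (Fin c) ℝ)
    (hdiag : ∀ i, R i i = 0)
    (hmem : ∀ i j, i ≠ j → R i j ∈ Set.Ioo (0 : ℝ) 1)
    (hsym : ∀ i j, i ≠ j → R i j + R j i = 1)
    (p : Fin c → ℝ) (hpos : ∀ i, 0 < p i) (hsum : ∑ i, p i = 1)
    (hbal : ∀ i j, i ≠ j → R i j * p j = R j i * p i) :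
    (∑ i, ∑ j ∈ Finset.univ.erase i, (R i j * p j - R j i * p i) ^ 2 = 0) ∧
    (∀ q : Fin c → ℝ, (∀ i, 0 < q i) → ∑ i, q i = 1 →
      ∑ i, ∑ j ∈ Finset.univ.erase i, (R i j * q j - R j i * q i) ^ 2 = 0 →
      q = p) :=
  wu_lin_weng_unique_minimizer_general c R hmem p hsum hbal
end

section
/- A family (θ_ij)_{i≠j} of real numbers arises from some positive probability vector p via θ_ij = log(1/r_ij − 1) with r_ij = p_i/(p_i+p_j) if and only if θ_ij = −θ_ji for all i ≠ j and θ_ij + θ_jk = θ_ik for all distinct i, j, k. Moreover the set of such families is a linear subspace of ℝ^{c(c−1)} of dimension c − 1. -/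
/-!
Since `1 / (p i / (p i + p j)) - 1 = p j / p i`, the families in question are exactly the
potential differences `θ i j = f j - f i` (take `f = log p`; conversely `f` differs by a
constant from `log p` for the normalized positive vector `p = exp f / ∑ exp f`). A family with zero diagonal is a
potential difference iff it is an antisymmetric cocycle, the potential being `θ z ·` for any
base point `z`. The potential differences form the range of the linear map
`f ↦ (f j - f i)ᵢⱼ`, whose kernel is the line of constants, so it has dimension `c - 1`.
-/

open Module

section Cocycle

variable {ι G : Type*} [AddCommGroup G] {θ : ι → ι → G}

theorem eq_sub_of_antisymm_of_cocycle (hd : ∀ i, θ i i = 0)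
    (ha : ∀ i j, i ≠ j → θ i j = -θ j i)
    (hco : ∀ i j k, i ≠ j → j ≠ k → i ≠ k → θ i j + θ j k = θ i k) (z i j : ι) :
    θ i j = θ z j - θ z i := by
  by_cases hij : i = j
  · simp [hij, hd]
  by_cases hiz : i = z
  · simp [hiz, hd]
  by_cases hjz : j = z
  · simp [hjz, hd, ha i z hiz]
  rw [← hco i z j hiz (Ne.symm hjz) hij, ha i z hiz]
  abel

theorem antisymm_and_cocycle_of_eq_sub {f : ι → G} (h : ∀ i j, i ≠ j → θ i j = f j - f i) :
    (∀ i j, i ≠ j → θ i j = -θ j i) ∧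
      (∀ i j k, i ≠ j → j ≠ k → i ≠ k → θ i j + θ j k = θ i k) := by
  refine ⟨fun i j hij => ?_, fun i j k hij hjk hik => ?_⟩
  · rw [h i j hij, h j i (Ne.symm hij), neg_sub]
  · rw [h i j hij, h j k hjk, h i k hik, add_comm, sub_add_sub_cancel]

end Cocycle

section PotentialDiff

variable (K ι : Type*) [Field K]

def potentialDiff : (ι → K) →ₗ[K] ι → ι → K where
  toFun f i j := f j - f i
  map_add' f g := by funext i j; simp only [Pi.add_apply]; ring
  map_smul' a f := by funext i j; simp only [Pi.smul_apply, smul_eq_mul, RingHom.id_apply]; ring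

variable {K ι}

@[simp]
theorem potentialDiff_apply (f : ι → K) (i j : ι) : potentialDiff K ι f i j = f j - f i :=
  rfl

theorem mem_range_potentialDiff_iff [Nonempty ι] {θ : ι → ι → K} :
    θ ∈ LinearMap.range (potentialDiff K ι) ↔
      (∀ i, θ i i = 0) ∧ (∀ i j, i ≠ j → θ i j = -θ j i) ∧
        (∀ i j k, i ≠ j → j ≠ k → i ≠ k → θ i j + θ j k = θ i k) := by
  constructor
  · rintro ⟨f, rfl⟩
    exact ⟨fun i => sub_self (f i), antisymm_and_cocycle_of_eq_sub fun i j _ => rfl⟩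
  · rintro ⟨hd, ha, hco⟩
    obtain ⟨z⟩ := ‹Nonempty ι›
    exact ⟨θ z, funext₂ fun i j => (eq_sub_of_antisymm_of_cocycle hd ha hco z i j).symm⟩

theorem ker_potentialDiff [Nonempty ι] :
    LinearMap.ker (potentialDiff K ι) = K ∙ (fun _ => 1 : ι → K) := by
  obtain ⟨z⟩ := ‹Nonempty ι›
  ext f
  rw [LinearMap.mem_ker, Submodule.mem_span_singleton]
  constructor
  · intro h
    refine ⟨f z, funext fun i => ?_⟩
    simpa [sub_eq_zero, eq_comm] using congrFun₂ h z i
  · rintro ⟨a, rfl⟩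
    ext
    simp

theorem finrank_range_potentialDiff [Fintype ι] [Nonempty ι] :
    finrank K (LinearMap.range (potentialDiff K ι)) = Fintype.card ι - 1 := by
  have hker : finrank K (LinearMap.ker (potentialDiff K ι)) = 1 := by
    rw [ker_potentialDiff, finrank_span_singleton (Function.const_ne_zero.mpr one_ne_zero)]
  have := LinearMap.finrank_range_add_finrank_ker (potentialDiff K ι)
  rw [hker, finrank_fintype_fun_eq_card] at this
  omega

end PotentialDiff

section LogOdds

open Real

theorem log_one_div_div_add_sub_one {a b : ℝ} (ha : 0 < a) (hb : 0 < b) :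
    log (1 / (a / (a + b)) - 1) = log b - log a := by
  have h : 1 / (a / (a + b)) - 1 = b / a := by
    field_simp
    ring
  rw [h, log_div hb.ne' ha.ne']

theorem exists_prob_log_odds_iff {ι : Type*} [Fintype ι] [Nonempty ι] {θ : ι → ι → ℝ} :
    (∃ p : ι → ℝ, (∀ i, 0 < p i) ∧ ∑ i, p i = 1 ∧
        ∀ i j, i ≠ j → θ i j = log (1 / (p i / (p i + p j)) - 1)) ↔
      ∃ f : ι → ℝ, ∀ i j, i ≠ j → θ i j = f j - f i := by
  constructor
  · rintro ⟨p, hp, -, hθ⟩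
    exact ⟨log ∘ p, fun i j hij => by
      rw [hθ i j hij, log_one_div_div_add_sub_one (hp i) (hp j), Function.comp_apply,
        Function.comp_apply]⟩
  · rintro ⟨f, hθ⟩
    set S := ∑ k, exp (f k)
    have hS : 0 < S := Finset.sum_pos (fun k _ => exp_pos (f k)) Finset.univ_nonempty
    have hp : ∀ i, 0 < exp (f i) / S := fun i => div_pos (exp_pos _) hS
    refine ⟨fun i => exp (f i) / S, hp, by rw [← Finset.sum_div, div_self hS.ne'], ?_⟩
    intro i j hij
    rw [log_one_div_div_add_sub_one (hp i) (hp j), log_div (exp_pos _).ne' hS.ne',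
      log_div (exp_pos _).ne' hS.ne', log_exp, log_exp, hθ i j hij]
    ring

end LogOdds

/-- A family `θ` (with zero diagonal) arises from a positive probability
vector via `θ i j = log (1 / r i j - 1)`, `r i j = p i / (p i + p j)`, if and
only if it is antisymmetric and satisfies the additive cocycle condition;
moreover the set of such families is a linear subspace of dimension `c - 1`. -/
theorem bradley_terry_theta_characterization (c : ℕ) (hc : 2 ≤ c) :
    (∀ θ : Fin c → Fin c → ℝ, (∀ i, θ i i = 0) →
      ((∃ p : Fin c → ℝ, (∀ i, 0 < p i) ∧ ∑ i, p i = 1 ∧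
          ∀ i j, i ≠ j → θ i j = Real.log (1 / (p i / (p i + p j)) - 1)) ↔
        ((∀ i j, i ≠ j → θ i j = -θ j i) ∧
         (∀ i j k, i ≠ j → j ≠ k → i ≠ k → θ i j + θ j k = θ i k)))) ∧
    (∃ V : Submodule ℝ (Fin c → Fin c → ℝ),
      (V : Set (Fin c → Fin c → ℝ)) =
        {θ | (∀ i, θ i i = 0) ∧ (∀ i j, i ≠ j → θ i j = -θ j i) ∧
             (∀ i j k, i ≠ j → j ≠ k → i ≠ k → θ i j + θ j k = θ i k)} ∧
      Module.finrank ℝ V = c - 1) := by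
  have : NeZero c := ⟨by omega⟩
  refine ⟨fun θ hd => exists_prob_log_odds_iff.trans ⟨?_, ?_⟩, ?_⟩
  · rintro ⟨f, hθ⟩
    exact antisymm_and_cocycle_of_eq_sub hθ
  · rintro ⟨ha, hco⟩
    exact ⟨θ 0, fun i j _ => eq_sub_of_antisymm_of_cocycle hd ha hco 0 i j⟩
  · refine ⟨LinearMap.range (potentialDiff ℝ (Fin c)), ?_, ?_⟩
    · ext θ
      exact mem_range_potentialDiff_iff
    · rw [finrank_range_potentialDiff, Fintype.card_fin]
end

section
/- For c ≥ 3, there exists an admissible pairwise likelihood matrix R (zero diagonal, off-diagonal entries in (0,1), r_ij + r_ji = 1) that is not the pairwise likelihood matrix of any positive probability vector. -/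
/-!
A Bradley–Terry matrix `r i j = p i / (p i + p j)` is cycle-consistent: around any triangle,
`r i j * r j k * r k i = r j i * r k j * r i k`, both sides being
`p i * p j * p k / ((p i + p j) * (p j + p k) * (p k + p i))`. Tilting a single pair of the
uniform matrix `1/2` to `2/3` versus `1/3` keeps it admissible but breaks this identity:
the two cyclic products through a third index are `1/6` and `1/12`.
-/

theorem div_add_mul_div_add_mul_div_add_eq (a b c : ℝ) :
    a / (a + b) * (b / (b + c)) * (c / (c + a)) =
      b / (b + a) * (c / (c + b)) * (a / (a + c)) := by
  rw [add_comm b a, add_comm c b, add_comm a c]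
  ring

theorem cycle_mul_eq_of_forall_eq_div_add {ι : Type*} {R : Matrix ι ι ℝ} {p : ι → ℝ}
    (hR : ∀ i j, i ≠ j → R i j = p i / (p i + p j)) {i j k : ι}
    (hij : i ≠ j) (hjk : j ≠ k) (hki : k ≠ i) :
    R i j * R j k * R k i = R j i * R k j * R i k := by
  rw [hR i j hij, hR j k hjk, hR k i hki, hR j i hij.symm, hR k j hjk.symm, hR i k hki.symm]
  exact div_add_mul_div_add_mul_div_add_eq (p i) (p j) (p k)

section TiltedPairMatrix

variable {ι : Type*} [DecidableEq ι]

noncomputable def tiltedPairMatrix (a b : ι) : Matrix ι ι ℝ := fun i j =>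
  if i = j then 0 else if i = a ∧ j = b then 2 / 3 else if i = b ∧ j = a then 1 / 3 else 1 / 2

theorem tiltedPairMatrix_diag (a b i : ι) : tiltedPairMatrix a b i i = 0 := by
  simp [tiltedPairMatrix]

theorem tiltedPairMatrix_mem_Ioo (a b : ι) {i j : ι} (hij : i ≠ j) :
    tiltedPairMatrix a b i j ∈ Set.Ioo (0 : ℝ) 1 := by
  simp only [tiltedPairMatrix, if_neg hij]
  split_ifs <;> constructor <;> norm_num

theorem tiltedPairMatrix_add_transpose (a b : ι) {i j : ι} (hij : i ≠ j) :
    tiltedPairMatrix a b i j + tiltedPairMatrix a b j i = 1 := by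
  simp only [tiltedPairMatrix, if_neg hij, if_neg hij.symm]
  split_ifs <;> (try norm_num) <;> simp_all

theorem tiltedPairMatrix_cycle_mul_ne {a b k : ι} (hab : a ≠ b) (hak : a ≠ k) (hbk : b ≠ k) :
    tiltedPairMatrix a b a b * tiltedPairMatrix a b b k * tiltedPairMatrix a b k a ≠
      tiltedPairMatrix a b b a * tiltedPairMatrix a b k b * tiltedPairMatrix a b a k := by
  norm_num [tiltedPairMatrix, hab, hab.symm, hak, hak.symm, hbk, hbk.symm]

end TiltedPairMatrix

/-- For `c ≥ 3`, there is an admissible pairwise matrix which is not the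
pairwise likelihood matrix of any positive probability vector. -/
theorem exists_admissible_not_bradley_terry (c : ℕ) (hc : 3 ≤ c) :
    ∃ R : Matrix (Fin c) (Fin c) ℝ,
      (∀ i, R i i = 0) ∧
      (∀ i j, i ≠ j → R i j ∈ Set.Ioo (0 : ℝ) 1) ∧
      (∀ i j, i ≠ j → R i j + R j i = 1) ∧
      ¬ ∃ p : Fin c → ℝ, (∀ i, 0 < p i) ∧ ∑ i, p i = 1 ∧
          ∀ i j, i ≠ j → R i j = p i / (p i + p j) := by
  obtain ⟨a, b, k, hab, hak, hbk⟩ :=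
    Fintype.two_lt_card_iff.mp (by rw [Fintype.card_fin]; omega : 2 < Fintype.card (Fin c))
  refine ⟨tiltedPairMatrix a b, tiltedPairMatrix_diag a b,
    fun _ _ => tiltedPairMatrix_mem_Ioo a b, fun _ _ => tiltedPairMatrix_add_transpose a b, ?_⟩
  rintro ⟨p, -, -, hp⟩
  exact tiltedPairMatrix_cycle_mul_ne hab hak hbk
    (cycle_mul_eq_of_forall_eq_div_add hp hab hbk hak.symm)
end

section
/- Let R be an admissible pairwise matrix (zero diagonal, off-diagonal entries in (0,1), r_ij + r_ji = 1) satisfying the cocycle condition (r_ij/(1−r_ij))·(r_jk/(1−r_jk)) = r_ik/(1−r_ik) for all distinct i,j,k. Then there exists a unique positive probability vector p with r_ij = p_i/(p_i+p_j) for all i ≠ j. -/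
/-!
Fix an anchor `z` and put `w z = 1`, `w i = odds (R i z)`. As `odds (R z j) = (odds (R j z))⁻¹`
by `r_zj + r_jz = 1`, the cocycle condition through `z` says exactly `odds (R i j) = w i / w j`,
i.e. `R i j = w i / (w i + w j)`; normalising `w` gives `p`. Conversely every solution has
`p i / p j = odds (R i j)`, so two solutions are proportional, hence equal once both sum to `1`.
-/

open Set

noncomputable def odds (r : ℝ) : ℝ := r / (1 - r)

lemma odds_pos {r : ℝ} (hr : r ∈ Ioo 0 1) : 0 < odds r :=
  div_pos hr.1 (sub_pos.mpr hr.2)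

lemma odds_one_sub (r : ℝ) : odds (1 - r) = (odds r)⁻¹ := by
  rw [odds, odds, sub_sub_cancel, inv_div]

lemma odds_div_add {a b : ℝ} (hab : a + b ≠ 0) : odds (a / (a + b)) = a / b := by
  have hsub : 1 - a / (a + b) = b / (a + b) := by field_simp; ring
  rw [odds, hsub, div_div_div_cancel_right₀ hab]

lemma eq_div_add_of_odds_eq_div {r a b : ℝ} (hr : r ≠ 1) (hb : b ≠ 0) (hab : a + b ≠ 0)
    (h : odds r = a / b) : r = a / (a + b) := by
  rw [odds, div_eq_div_iff (sub_ne_zero.mpr hr.symm) hb] at h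
  rw [eq_div_iff hab]
  linarith

lemma eq_of_div_add_eq {ι : Type*} [Fintype ι] {p q : ι → ℝ}
    (hp : ∀ i, 0 < p i) (hq : ∀ i, 0 < q i) (hsum : ∑ i, p i = ∑ i, q i)
    (h : ∀ i j, i ≠ j → p i / (p i + p j) = q i / (q i + q j)) : p = q := by
  have cross : ∀ i j, p i * q j = q i * p j := by
    intro i j
    rcases eq_or_ne i j with rfl | hij
    · ring
    have hodds := congrArg odds (h i j hij)
    rw [odds_div_add (add_pos (hp i) (hp j)).ne', odds_div_add (add_pos (hq i) (hq j)).ne',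
      div_eq_div_iff (hp j).ne' (hq j).ne'] at hodds
    linarith
  funext j
  have hS : 0 < ∑ i, p i := Finset.sum_pos (fun i _ => hp i) ⟨j, Finset.mem_univ j⟩
  have hscale : (∑ i, p i) * q j = (∑ i, p i) * p j := by
    calc (∑ i, p i) * q j = ∑ i, q i * p j := by
          rw [Finset.sum_mul]; exact Finset.sum_congr rfl fun i _ => cross i j
      _ = (∑ i, p i) * p j := by rw [← Finset.sum_mul, hsum]
  exact (mul_left_cancel₀ hS.ne' hscale).symm

section Cocycle

variable {ι : Type*} [DecidableEq ι] {R : ι → ι → ℝ}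

noncomputable def anchoredOdds (R : ι → ι → ℝ) (z i : ι) : ℝ :=
  if i = z then 1 else odds (R i z)

lemma anchoredOdds_pos (hmem : ∀ i j, i ≠ j → R i j ∈ Ioo (0 : ℝ) 1) (z i : ι) :
    0 < anchoredOdds R z i := by
  unfold anchoredOdds
  split_ifs with h
  exacts [one_pos, odds_pos (hmem i z h)]

lemma odds_eq_anchoredOdds_div (hsym : ∀ i j, i ≠ j → R i j + R j i = 1)
    (hcoc : ∀ i j k, i ≠ j → j ≠ k → i ≠ k →
      (R i j / (1 - R i j)) * (R j k / (1 - R j k)) = R i k / (1 - R i k))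
    (z : ι) {i j : ι} (hij : i ≠ j) :
    odds (R i j) = anchoredOdds R z i / anchoredOdds R z j := by
  have odds_from_anchor : ∀ k, k ≠ z → odds (R z k) = (odds (R k z))⁻¹ := fun k hk => by
    rw [← odds_one_sub, ← hsym k z hk, add_sub_cancel_left]
  unfold anchoredOdds
  by_cases hiz : i = z
  · subst hiz
    rw [if_pos rfl, if_neg hij.symm, odds_from_anchor j hij.symm, one_div]
  by_cases hjz : j = z
  · subst hjz
    rw [if_neg hiz, if_pos rfl, div_one]
  rw [if_neg hiz, if_neg hjz, div_eq_mul_inv, ← odds_from_anchor j hjz]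
  exact (hcoc i z j hiz (Ne.symm hjz) hij).symm

lemma exists_div_add_of_cocycle [Fintype ι] (z : ι)
    (hmem : ∀ i j, i ≠ j → R i j ∈ Ioo (0 : ℝ) 1)
    (hsym : ∀ i j, i ≠ j → R i j + R j i = 1)
    (hcoc : ∀ i j k, i ≠ j → j ≠ k → i ≠ k →
      (R i j / (1 - R i j)) * (R j k / (1 - R j k)) = R i k / (1 - R i k)) :
    ∃ p : ι → ℝ, (∀ i, 0 < p i) ∧ ∑ i, p i = 1 ∧
      ∀ i j, i ≠ j → R i j = p i / (p i + p j) := by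
  set w := anchoredOdds R z
  have hw := anchoredOdds_pos hmem z
  have hS : 0 < ∑ i, w i := Finset.sum_pos (fun i _ => hw i) ⟨z, Finset.mem_univ z⟩
  refine ⟨fun i => w i / ∑ k, w k, fun i => div_pos (hw i) hS, ?_, fun i j hij => ?_⟩
  · rw [← Finset.sum_div, div_self hS.ne']
  · rw [← add_div, div_div_div_cancel_right₀ hS.ne']
    exact eq_div_add_of_odds_eq_div (hmem i j hij).2.ne (hw j).ne' (add_pos (hw i) (hw j)).ne'
      (odds_eq_anchoredOdds_div hsym hcoc z hij)

end Cocycle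

theorem cocycle_implies_bradley_terry_general (c : ℕ) (hc : 2 ≤ c)
    (R : Matrix (Fin c) (Fin c) ℝ)
    (hmem : ∀ i j, i ≠ j → R i j ∈ Set.Ioo (0 : ℝ) 1)
    (hsym : ∀ i j, i ≠ j → R i j + R j i = 1)
    (hcoc : ∀ i j k, i ≠ j → j ≠ k → i ≠ k →
      (R i j / (1 - R i j)) * (R j k / (1 - R j k)) = R i k / (1 - R i k)) :
    ∃! p : Fin c → ℝ, (∀ i, 0 < p i) ∧ ∑ i, p i = 1 ∧
      ∀ i j, i ≠ j → R i j = p i / (p i + p j) := by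
  refine existsUnique_of_exists_of_unique
    (exists_div_add_of_cocycle ⟨0, by omega⟩ hmem hsym hcoc) ?_
  rintro p q ⟨hp, hp_sum, hpR⟩ ⟨hq, hq_sum, hqR⟩
  exact eq_of_div_add_eq hp hq (hp_sum.trans hq_sum.symm)
    fun i j hij => (hpR i j hij).symm.trans (hqR i j hij)

/-- An admissible pairwise matrix satisfying the multiplicative cocycle
condition is the pairwise likelihood matrix of a unique positive probability
vector. -/
theorem cocycle_implies_bradley_terry (c : ℕ) (hc : 2 ≤ c)
    (R : Matrix (Fin c) (Fin c) ℝ)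
    (hdiag : ∀ i, R i i = 0)
    (hmem : ∀ i j, i ≠ j → R i j ∈ Set.Ioo (0 : ℝ) 1)
    (hsym : ∀ i j, i ≠ j → R i j + R j i = 1)
    (hcoc : ∀ i j k, i ≠ j → j ≠ k → i ≠ k →
      (R i j / (1 - R i j)) * (R j k / (1 - R j k)) = R i k / (1 - R i k)) :
    ∃! p : Fin c → ℝ, (∀ i, 0 < p i) ∧ ∑ i, p i = 1 ∧
      ∀ i j, i ≠ j → R i j = p i / (p i + p j) :=
  cocycle_implies_bradley_terry_general c hc R hmem hsym hcoc
end
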